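/- Let r be a prime and let P, P', Λ, Λ' be n×n integer matrices such that P and P' are upper unitriangular (upper triangular with 1's on the diagonal), Λ and Λ' are diagonal, and Pᵀ·Λ·P ≡ P'ᵀ·Λ'·P' (mod r) entrywise, where the common value Ω satisfies r ∤ det(Ω). Then P ≡ P' (mod r) and Λ ≡ Λ' (mod r) entrywise. -/
import Mathlib


open Matrix
/-- Uniqueness mod r in the Lusztig–Shoji algorithm (diagonal-Λ case). -/
theorem stmt_0 {n : ℕ} (r : ℕ) (hr : r.Prime)
    (P P' L L' : Matrix (Fin n) (Fin n) ℤ)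
    (hPu : ∀ i j : Fin n, j < i → P i j = 0) (hPd : ∀ i : Fin n, P i i = 1)
    (hP'u : ∀ i j : Fin n, j < i → P' i j = 0) (hP'd : ∀ i : Fin n, P' i i = 1)
    (hL : ∀ i j : Fin n, i ≠ j → L i j = 0)
    (hL' : ∀ i j : Fin n, i ≠ j → L' i j = 0)
    (hcong : ∀ i j : Fin n,
      (Pᵀ * L * P) i j ≡ (P'ᵀ * L' * P') i j [ZMOD r])
    (hdet : ¬ (r : ℤ) ∣ (Pᵀ * L * P).det) :
    (∀ i j : Fin n, P i j ≡ P' i j [ZMOD r]) ∧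
    (∀ i j : Fin n, L i j ≡ L' i j [ZMOD r]) := by
  haveI : Fact r.Prime := ⟨hr⟩
  set f : ℤ →+* ZMod r := Int.castRingHom (ZMod r) with hf
  set Q := P.map f with hQdef
  set Q' := P'.map f with hQ'def
  set D := L.map f with hDdef
  set D' := L'.map f with hD'def
  have hQbt : Q.BlockTriangular id := fun i j h => by
    simp [hQdef, Matrix.map_apply, hPu i j h]
  have hQ'bt : Q'.BlockTriangular id := fun i j h => by
    simp [hQ'def, Matrix.map_apply, hP'u i j h]
  have hQd : ∀ i, Q i i = 1 := fun i => by
    simp [hQdef, Matrix.map_apply, hPd i]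
  have hQ'd : ∀ i, Q' i i = 1 := fun i => by
    simp [hQ'def, Matrix.map_apply, hP'd i]
  have hDo : ∀ i j : Fin n, i ≠ j → D i j = 0 := fun i j h => by
    simp [hDdef, Matrix.map_apply, hL i j h]
  have hD'o : ∀ i j : Fin n, i ≠ j → D' i j = 0 := fun i j h => by
    simp [hD'def, Matrix.map_apply, hL' i j h]
  have hmapA : (Pᵀ * L * P).map f = Qᵀ * D * Q := by
    rw [hQdef, hDdef, Matrix.map_mul, Matrix.map_mul, Matrix.transpose_map]
  have hmapB : (P'ᵀ * L' * P').map f = Q'ᵀ * D' * Q' := by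
    rw [hQ'def, hD'def, Matrix.map_mul, Matrix.map_mul, Matrix.transpose_map]
  have hA : Qᵀ * D * Q = Q'ᵀ * D' * Q' := by
    rw [← hmapA, ← hmapB]
    ext i j
    exact (ZMod.intCast_eq_intCast_iff _ _ _).mpr (hcong i j)
  have hAdet : (Qᵀ * D * Q).det ≠ 0 := by
    rw [← hmapA]
    have hd : ((Pᵀ * L * P).map ⇑f).det = f (Pᵀ * L * P).det := by
      rw [RingHom.map_det]; rfl
    rw [hd]
    intro h
    exact hdet ((ZMod.intCast_zmod_eq_zero_iff_dvd _ _).mp h)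
  have hQdet : Q.det = 1 := by
    rw [Matrix.det_of_upperTriangular hQbt]
    simp [hQd]
  have hQ'det : Q'.det = 1 := by
    rw [Matrix.det_of_upperTriangular hQ'bt]
    simp [hQ'd]
  haveI : Invertible Q := Q.invertibleOfIsUnitDet (by rw [hQdet]; exact isUnit_one)
  haveI : Invertible Q' := Q'.invertibleOfIsUnitDet (by rw [hQ'det]; exact isUnit_one)
  haveI : Invertible Qᵀ := Q.invertibleTranspose
  -- diagonal entries of D' are nonzero
  have hD'det : D'.det ≠ 0 := by
    intro h
    apply hAdet
    rw [hA, Matrix.det_mul, Matrix.det_mul, h, mul_zero, zero_mul]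
  have hD'bt : D'.BlockTriangular id := fun i j h => hD'o i j (ne_of_gt h)
  have hD'diag : ∀ i, D' i i ≠ 0 := by
    intro i
    rw [Matrix.det_of_upperTriangular hD'bt] at hD'det
    exact Finset.prod_ne_zero_iff.mp hD'det i (Finset.mem_univ i)
  set M := Q' * Q⁻¹ with hMdef
  have hMdetcomp : M.det = 1 := by
    rw [hMdef, Matrix.det_mul, Matrix.det_nonsing_inv, hQdet, hQ'det]
    simp
  haveI : Invertible M := M.invertibleOfIsUnitDet (by rw [hMdetcomp]; exact isUnit_one)
  haveI : Invertible Mᵀ := M.invertibleTranspose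
  have hMbt : M.BlockTriangular id :=
    hQ'bt.mul (Matrix.blockTriangular_inv_of_blockTriangular hQbt)
  have hMeq : Mᵀ * D' * M = D := by
    have e1 : Mᵀ * D' * M = (Q⁻¹)ᵀ * (Q'ᵀ * D' * Q') * Q⁻¹ := by
      rw [hMdef, Matrix.transpose_mul]
      simp [Matrix.mul_assoc]
    rw [e1, ← hA, Matrix.transpose_nonsing_inv]
    calc (Qᵀ)⁻¹ * (Qᵀ * D * Q) * Q⁻¹
        = ((Qᵀ)⁻¹ * Qᵀ) * D * (Q * Q⁻¹) := by simp [Matrix.mul_assoc]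
      _ = D := by
          rw [Matrix.inv_mul_of_invertible, Matrix.mul_inv_of_invertible, Matrix.one_mul,
            Matrix.mul_one]
  have h2 : D' * M = (Mᵀ)⁻¹ * D := by
    have := congrArg (fun X => (Mᵀ)⁻¹ * X) hMeq
    simpa [Matrix.mul_assoc, Matrix.inv_mul_cancel_left_of_invertible] using this
  have hMlow : ((Mᵀ)⁻¹).BlockTriangular (OrderDual.toDual ∘ id) :=
    Matrix.blockTriangular_inv_of_blockTriangular hMbt.transpose
  have hMoff : ∀ i j : Fin n, i ≠ j → M i j = 0 := by
    intro i j hij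
    rcases lt_or_gt_of_ne hij with h | h
    · have e1 : (D' * M) i j = D' i i * M i j := by
        rw [Matrix.mul_apply]
        exact Finset.sum_eq_single i
          (fun k _ hk => by rw [hD'o i k (Ne.symm hk), zero_mul]) (by simp)
      have e2 : ((Mᵀ)⁻¹ * D) i j = 0 := by
        rw [Matrix.mul_apply]
        apply Finset.sum_eq_zero
        intro k _
        by_cases hk : k = j
        · subst hk
          rw [hMlow (show (OrderDual.toDual ∘ id) k < (OrderDual.toDual ∘ id) i from
            OrderDual.toDual_lt_toDual.mpr h), zero_mul]
        · rw [hDo k j hk, mul_zero]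
      have e3 : D' i i * M i j = 0 := by
        rw [← e1, h2, e2]
      exact (mul_eq_zero.mp e3).resolve_left (hD'diag i)
    · exact hMbt h
  have hQ'eq : Q' = M * Q := by
    rw [hMdef, Matrix.inv_mul_cancel_right_of_invertible]
  have hMdiag : ∀ i, M i i = 1 := by
    intro i
    have e : (M * Q) i i = M i i := by
      rw [Matrix.mul_apply]
      rw [Finset.sum_eq_single i
        (fun k _ hk => by rw [hMoff i k (Ne.symm hk), zero_mul]) (by simp)]
      rw [hQd i, mul_one]
    rw [← e, ← hQ'eq, hQ'd i]
  have hM1 : M = 1 := by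
    ext i j
    by_cases h : i = j
    · subst h; rw [hMdiag i, Matrix.one_apply_eq]
    · rw [hMoff i j h, Matrix.one_apply_ne h]
  have hQQ' : Q = Q' := by
    rw [hQ'eq, hM1, Matrix.one_mul]
  have hDD' : D = D' := by
    have e : Qᵀ * D * Q = Qᵀ * D' * Q := by rw [hA, ← hQQ']
    have h3 := congrArg (fun X => (Qᵀ)⁻¹ * X * Q⁻¹) e
    simpa [Matrix.mul_assoc, Matrix.inv_mul_cancel_left_of_invertible,
      Matrix.mul_inv_cancel_right_of_invertible] using h3
  constructor
  · intro i j
    have : Q i j = Q' i j := by rw [hQQ']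
    exact (ZMod.intCast_eq_intCast_iff _ _ _).mp this
  · intro i j
    have : D i j = D' i j := by rw [hDD']
    exact (ZMod.intCast_eq_intCast_iff _ _ _).mp this
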